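/- Let F_p, F_v : ℝ → ℝ^n be continuously differentiable. Then for every t ≥ 0, ∫₀ᵗ exp((t−τ) A0) θ1 (F_v(τ) − F_p'(τ)) dτ = ∫₀ᵗ exp((t−τ) A0) θ2 (F_v'(τ) − α_p F_p(τ) − α_v F_v(τ)) dτ + exp(t A0) (θ1 F_p(0) + θ2 F_v(0)) − θ1 F_p(t) − θ2 F_v(t). -/

import Mathlib

/-!
Write `x = θ1 F_p + θ2 F_v`, the vector `(F_p, F_v)`. Since `A0` is the companion-type matrix
with `A0 (p, v) = (v, α_p p + α_v v)`, one has
`x' - A0 x = θ2 (F_v' - α_p F_p - α_v F_v) - θ1 (F_v - F_p')`. On the other hand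
`τ ↦ exp((t - τ) A0) x(τ)` has derivative `exp((t - τ) A0) (x'(τ) - A0 x(τ))`, so integrating over
`[0, t]` yields `x(t) - exp(t A0) x(0)`, which is the identity after rearranging.
-/

open Matrix intervalIntegral

noncomputable section

/-- `θ1 = [I_n; 0]` as a `2n × n` real matrix (rows indexed by `Fin n ⊕ Fin n`). -/
def theta1 (n : ℕ) : Matrix (Fin n ⊕ Fin n) (Fin n) ℝ :=
  Matrix.of (Sum.elim (fun i j => (1 : Matrix (Fin n) (Fin n) ℝ) i j) (fun _ _ => 0))

/-- `θ2 = [0; I_n]` as a `2n × n` real matrix. -/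
def theta2 (n : ℕ) : Matrix (Fin n ⊕ Fin n) (Fin n) ℝ :=
  Matrix.of (Sum.elim (fun _ _ => 0) (fun i j => (1 : Matrix (Fin n) (Fin n) ℝ) i j))

/-- `α = [α_p I_n, α_v I_n]` as an `n × 2n` real matrix. -/
def alphaMat (n : ℕ) (αp αv : ℝ) : Matrix (Fin n) (Fin n ⊕ Fin n) ℝ :=
  Matrix.of fun i => Sum.elim (fun j => αp * (1 : Matrix (Fin n) (Fin n) ℝ) i j)
    (fun j => αv * (1 : Matrix (Fin n) (Fin n) ℝ) i j)

/-- `A0 = θ1 θ2ᵀ + θ2 [α_p I_n, α_v I_n]`, i.e. the block matrix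
`[[0, I_n], [α_p I_n, α_v I_n]]`. -/
def A0 (n : ℕ) (αp αv : ℝ) : Matrix (Fin n ⊕ Fin n) (Fin n ⊕ Fin n) ℝ :=
  theta1 n * (theta2 n)ᵀ + theta2 n * alphaMat n αp αv

theorem hasDerivAt_exp_sub_smul {𝕂 𝔸 : Type*} [RCLike 𝕂] [NormedRing 𝔸] [NormedAlgebra 𝕂 𝔸]
    [CompleteSpace 𝔸] (a : 𝔸) (t τ : 𝕂) :
    HasDerivAt (fun σ : 𝕂 => NormedSpace.exp ((t - σ) • a))
      (-(NormedSpace.exp ((t - τ) • a) * a)) τ := by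
  simpa [Function.comp_def] using
    (hasDerivAt_exp_smul_const a (t - τ)).scomp τ ((hasDerivAt_id τ).const_sub t)

section

variable {m n : Type*} [Fintype m] [Fintype n]

attribute [local instance] Matrix.linftyOpNormedAddCommGroup Matrix.linftyOpNormedSpace

theorem HasDerivAt.matrix_mulVec {M : ℝ → Matrix m n ℝ} {M' : Matrix m n ℝ} {v : ℝ → n → ℝ}
    {v' : n → ℝ} {τ : ℝ} (hM : HasDerivAt M M' τ) (hv : HasDerivAt v v' τ) :
    HasDerivAt (fun σ => M σ *ᵥ v σ) (M' *ᵥ v τ + M τ *ᵥ v') τ := by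
  simpa [add_comm] using
    (mulVecBilin ℝ ℝ).toContinuousBilinearMap.hasDerivAt_of_bilinear (fun _ => hM) fun _ => hv

theorem HasDerivAt.const_mulVec (M : Matrix m n ℝ) {v : ℝ → n → ℝ} {v' : n → ℝ} {τ : ℝ}
    (hv : HasDerivAt v v' τ) : HasDerivAt (fun σ => M *ᵥ v σ) (M *ᵥ v') τ := by
  simpa using (hasDerivAt_const τ M).matrix_mulVec hv

end

section

variable {m : Type*} [Fintype m] [DecidableEq m]

theorem hasDerivAt_exp_sub_smul_mulVec (A : Matrix m m ℝ) (t : ℝ) {x : ℝ → m → ℝ} {x' : m → ℝ}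
    {τ : ℝ} (hx : HasDerivAt x x' τ) :
    HasDerivAt (fun σ => NormedSpace.exp ((t - σ) • A) *ᵥ x σ)
      (NormedSpace.exp ((t - τ) • A) *ᵥ (x' - A *ᵥ x τ)) τ := by
  let _ := Matrix.linftyOpNormedRing (n := m) (α := ℝ)
  let _ := Matrix.linftyOpNormedAlgebra (n := m) (R := ℝ) (α := ℝ)
  refine ((hasDerivAt_exp_sub_smul A t τ).matrix_mulVec hx).congr_deriv ?_
  rw [neg_mulVec, ← mulVec_mulVec, mulVec_sub, neg_add_eq_sub]
  -- `exp` on the left is taken for the operator-norm topology, definitionally the product one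
  rfl

theorem continuous_exp_sub_smul_mulVec (A : Matrix m m ℝ) (t : ℝ) {f : ℝ → m → ℝ}
    (hf : Continuous f) : Continuous fun τ => NormedSpace.exp ((t - τ) • A) *ᵥ f τ := by
  let _ := Matrix.linftyOpNormedRing (n := m) (α := ℝ)
  let _ := Matrix.linftyOpNormedAlgebra (n := m) (R := ℝ) (α := ℝ)
  exact (continuous_iff_continuousAt.2 fun τ =>
    (hasDerivAt_exp_sub_smul A t τ).continuousAt).matrix_mulVec hf

theorem integral_exp_sub_smul_mulVec_sub_mulVec (A : Matrix m m ℝ) {x x' : ℝ → m → ℝ}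
    (hx : ∀ τ, HasDerivAt x (x' τ) τ) (hx' : Continuous x') (s t : ℝ) :
    ∫ τ in s..t, NormedSpace.exp ((t - τ) • A) *ᵥ (x' τ - A *ᵥ x τ)
      = x t - NormedSpace.exp ((t - s) • A) *ᵥ x s := by
  have hcont : Continuous x := continuous_iff_continuousAt.2 fun τ => (hx τ).continuousAt
  have hcont' : Continuous fun τ => x' τ - A *ᵥ x τ :=
    hx'.sub (continuous_const.matrix_mulVec hcont)
  rw [integral_eq_sub_of_hasDerivAt (fun τ _ => hasDerivAt_exp_sub_smul_mulVec A t (hx τ))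
    ((continuous_exp_sub_smul_mulVec A t hcont').intervalIntegrable s t)]
  simp

end

theorem theta1_eq_fromRows (n : ℕ) : theta1 n = fromRows 1 0 := rfl

theorem theta2_eq_fromRows (n : ℕ) : theta2 n = fromRows 0 1 := rfl

theorem alphaMat_eq_fromCols (n : ℕ) (αp αv : ℝ) :
    alphaMat n αp αv = fromCols (αp • 1) (αv • 1) := rfl

theorem A0_eq_fromBlocks (n : ℕ) (αp αv : ℝ) :
    A0 n αp αv = fromBlocks 0 1 (αp • 1) (αv • 1) := by
  rw [A0, theta1_eq_fromRows, theta2_eq_fromRows, alphaMat_eq_fromCols, transpose_fromRows,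
    fromRows_mul_fromCols, fromRows_mul_fromCols, fromBlocks_add]
  simp

theorem theta1_mulVec_add_theta2_mulVec (n : ℕ) (p v : Fin n → ℝ) :
    theta1 n *ᵥ p + theta2 n *ᵥ v = Sum.elim p v := by
  simp [theta1_eq_fromRows, theta2_eq_fromRows, fromRows_mulVec, ← Sum.elim_add_add]

theorem A0_mulVec_sumElim (n : ℕ) (αp αv : ℝ) (p v : Fin n → ℝ) :
    A0 n αp αv *ᵥ Sum.elim p v = Sum.elim v (αp • p + αv • v) := by
  simp [A0_eq_fromBlocks, fromBlocks_mulVec, Sum.elim_comp_inl, Sum.elim_comp_inr, smul_mulVec]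

theorem theta_mulVec_sub_A0_mulVec (n : ℕ) (αp αv : ℝ) (p v p' v' : Fin n → ℝ) :
    theta1 n *ᵥ p' + theta2 n *ᵥ v' - A0 n αp αv *ᵥ (theta1 n *ᵥ p + theta2 n *ᵥ v)
      = theta2 n *ᵥ (v' - αp • p - αv • v) - theta1 n *ᵥ (v - p') := by
  rw [sub_eq_neg_add (theta2 n *ᵥ _), ← mulVec_neg]
  simp only [theta1_mulVec_add_theta2_mulVec, A0_mulVec_sumElim, ← Sum.elim_sub_sub]
  congr 1 <;> abel

theorem formation_center_integration_by_parts_general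
    (n : ℕ) (αp αv : ℝ)
    (Fp Fv : ℝ → (Fin n → ℝ))
    (hFp : ContDiff ℝ 1 Fp) (hFv : ContDiff ℝ 1 Fv) :
    ∀ t : ℝ, 0 ≤ t →
      (∫ τ in (0:ℝ)..t, (NormedSpace.exp ((t - τ) • A0 n αp αv)).mulVec
          ((theta1 n).mulVec (Fv τ - deriv Fp τ)))
      = (∫ τ in (0:ℝ)..t, (NormedSpace.exp ((t - τ) • A0 n αp αv)).mulVec
          ((theta2 n).mulVec (deriv Fv τ - αp • Fp τ - αv • Fv τ)))
        + (NormedSpace.exp (t • A0 n αp αv)).mulVec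
            ((theta1 n).mulVec (Fp 0) + (theta2 n).mulVec (Fv 0))
        - (theta1 n).mulVec (Fp t) - (theta2 n).mulVec (Fv t) := by
  intro t _
  have hx (τ : ℝ) : HasDerivAt (fun σ => theta1 n *ᵥ Fp σ + theta2 n *ᵥ Fv σ)
      (theta1 n *ᵥ deriv Fp τ + theta2 n *ᵥ deriv Fv τ) τ :=
    ((hFp.differentiable one_ne_zero τ).hasDerivAt.const_mulVec _).add
      ((hFv.differentiable one_ne_zero τ).hasDerivAt.const_mulVec _)
  have hx' : Continuous fun τ => theta1 n *ᵥ deriv Fp τ + theta2 n *ᵥ deriv Fv τ :=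
    (continuous_const.matrix_mulVec (hFp.continuous_deriv le_rfl)).add
      (continuous_const.matrix_mulVec (hFv.continuous_deriv le_rfl))
  have hint (θ : Matrix (Fin n ⊕ Fin n) (Fin n) ℝ) {f : ℝ → Fin n → ℝ} (hf : Continuous f) :
      IntervalIntegrable (fun τ => NormedSpace.exp ((t - τ) • A0 n αp αv) *ᵥ θ *ᵥ f τ)
        MeasureTheory.volume 0 t :=
    (continuous_exp_sub_smul_mulVec _ t (continuous_const.matrix_mulVec hf)).intervalIntegrable 0 t
  have key := integral_exp_sub_smul_mulVec_sub_mulVec (A0 n αp αv) hx hx' 0 t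
  rw [integral_congr fun τ _ => by rw [theta_mulVec_sub_A0_mulVec, mulVec_sub], integral_sub,
    sub_zero] at key
  · linear_combination (norm := module) -key
  · exact hint _ (((hFv.continuous_deriv le_rfl).sub (hFp.continuous.const_smul αp)).sub
      (hFv.continuous.const_smul αv))
  · exact hint _ (hFv.continuous.sub (hFp.continuous_deriv le_rfl))

/-- integration-by-parts identity, equation (18) of the paper:
for continuously differentiable `F_p, F_v : ℝ → ℝ^n` and all `t ≥ 0`,
`∫₀ᵗ exp((t-τ) A0) θ1 (F_v τ - F_p' τ) dτ
  = ∫₀ᵗ exp((t-τ) A0) θ2 (F_v' τ - α_p F_p τ - α_v F_v τ) dτ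
    + exp(t A0) (θ1 F_p 0 + θ2 F_v 0) - θ1 F_p t - θ2 F_v t`. -/
theorem formation_center_integration_by_parts
    (n : ℕ) (hn : 1 ≤ n) (αp αv : ℝ)
    (Fp Fv : ℝ → (Fin n → ℝ))
    (hFp : ContDiff ℝ 1 Fp) (hFv : ContDiff ℝ 1 Fv) :
    ∀ t : ℝ, 0 ≤ t →
      (∫ τ in (0:ℝ)..t, (NormedSpace.exp ((t - τ) • A0 n αp αv)).mulVec
          ((theta1 n).mulVec (Fv τ - deriv Fp τ)))
      = (∫ τ in (0:ℝ)..t, (NormedSpace.exp ((t - τ) • A0 n αp αv)).mulVec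
          ((theta2 n).mulVec (deriv Fv τ - αp • Fp τ - αv • Fv τ)))
        + (NormedSpace.exp (t • A0 n αp αv)).mulVec
            ((theta1 n).mulVec (Fp 0) + (theta2 n).mulVec (Fv 0))
        - (theta1 n).mulVec (Fp t) - (theta2 n).mulVec (Fv t) :=
  formation_center_integration_by_parts_general n αp αv Fp Fv hFp hFv

end
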